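/- arXiv:2010.08194 — 2 statements merged into one kernel-verified Lean document; each statement's English description precedes it below -/
import Mathlib

section
/- For any integers N ≥ 2, k ≥ 0, ℓ ≥ 0 with k + ℓ ≤ N - 1, and any real number ξ, the sum over n from 0 to N-1 of sin(ℓ·(ξ - 2πn/N))·cos(ξ - 2πn/N)^k equals 0. -/
/-!
Expanding `cos θ = (e^{iθ} + e^{-iθ}) / 2` binomially writes `sin (l θ) cos θ ^ k` as the imaginary
part of a real combination of `e^{imθ}` with `|m| ≤ k + l < N`. Summed over the `N` equally spaced
angles, `e^{imθ}` gives a geometric sum of an `N`-th root of unity, which vanishes unless `m = 0`,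
when it is the real number `N`.
-/

open Real Finset

open Complex in
theorem Complex.sum_exp_int_mul_eq_zero_of_not_dvd {N : ℕ} {m : ℤ} (hm : ¬ (N : ℤ) ∣ m) (ξ : ℝ) :
    ∑ n ∈ range N, exp (m * ((ξ - 2 * π * n / N : ℝ) : ℂ) * I) = 0 := by
  rcases eq_or_ne N 0 with rfl | hN
  · simp
  set ζ := exp (2 * π * I / N)
  have hζ : IsPrimitiveRoot ζ N := isPrimitiveRoot_exp N hN
  have hterm (n : ℕ) : exp (m * ((ξ - 2 * π * n / N : ℝ) : ℂ) * I) =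
      exp (m * ξ * I) * (ζ ^ (-m)) ^ n := by
    rw [← exp_int_mul, ← exp_nat_mul, ← exp_add]
    congr 1
    push_cast
    field_simp
    ring
  have hne : ζ ^ (-m) ≠ 1 := by rwa [Ne, hζ.zpow_eq_one_iff_dvd, Int.dvd_neg]
  have hpow : (ζ ^ (-m)) ^ N = 1 := by
    rw [← zpow_natCast, ← zpow_mul, mul_comm, zpow_mul, zpow_natCast, hζ.pow_eq_one, one_zpow]
  simp_rw [hterm, ← mul_sum, geom_sum_eq hne, hpow, sub_self, zero_div, mul_zero]

open Complex in
theorem Complex.im_sum_exp_int_mul_eq_zero {N : ℕ} {m : ℤ} (hm : m.natAbs < N) (ξ : ℝ) :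
    (∑ n ∈ range N, exp (m * ((ξ - 2 * π * n / N : ℝ) : ℂ) * I)).im = 0 := by
  rcases eq_or_ne m 0 with rfl | hm0
  · simp
  · have hndvd : ¬ (N : ℤ) ∣ m := fun h =>
      hm0 (Int.eq_zero_of_dvd_of_natAbs_lt_natAbs h (by simpa using hm))
    rw [sum_exp_int_mul_eq_zero_of_not_dvd hndvd, zero_im]

open Complex in
theorem Complex.exp_mul_I_mul_cos_pow_eq_sum (k l : ℕ) (θ : ℝ) :
    exp (l * θ * I) * (cos θ) ^ k =
      ∑ j ∈ range (k + 1), ((k.choose j / 2 ^ k : ℝ) : ℂ) * exp ((l - k + 2 * j : ℤ) * θ * I) := by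
  set w := exp (θ * I)
  have hw : w ≠ 0 := exp_ne_zero _
  have hcos : cos θ = (w + w⁻¹) / 2 := by
    rw [cos, ← exp_neg, neg_mul]
  have hexp (m : ℤ) : exp (m * θ * I) = w ^ m := by rw [mul_assoc, exp_int_mul]
  rw [hcos, div_pow, add_pow, mul_div_assoc', mul_sum, sum_div]
  refine sum_congr rfl fun j hj => ?_
  have hjk : j ≤ k := Nat.lt_succ_iff.mp (mem_range.mp hj)
  rw [hexp, show (l : ℂ) * θ * I = (l : ℤ) * θ * I by push_cast; rfl, hexp,
    show (l - k + 2 * j : ℤ) = l + j - (k - j : ℕ) by push_cast [hjk]; ring,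
    zpow_sub₀ hw, zpow_add₀ hw]
  simp only [zpow_natCast, inv_pow]
  push_cast
  field_simp

theorem Real.sin_nat_mul_mul_cos_pow_eq_im_sum (k l : ℕ) (θ : ℝ) :
    sin (l * θ) * cos θ ^ k =
      (∑ j ∈ range (k + 1), ((k.choose j / 2 ^ k : ℝ) : ℂ) *
        Complex.exp ((l - k + 2 * j : ℤ) * θ * Complex.I)).im := by
  rw [← Complex.exp_mul_I_mul_cos_pow_eq_sum, ← Complex.ofReal_cos, ← Complex.ofReal_pow,
    Complex.im_mul_ofReal, ← Complex.ofReal_natCast, ← Complex.ofReal_mul,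
    Complex.exp_ofReal_mul_I_im]

theorem trig_sum_vanishes_general (N k l : ℕ) (hkl : k + l ≤ N - 1) (ξ : ℝ) :
    ∑ n ∈ Finset.range N,
      Real.sin (l * (ξ - 2 * π * n / N)) * Real.cos (ξ - 2 * π * n / N) ^ k = 0 := by
  rcases N.eq_zero_or_pos with rfl | hN
  · simp
  simp_rw [sin_nat_mul_mul_cos_pow_eq_im_sum, ← Complex.im_sum]
  rw [sum_comm, Complex.im_sum]
  refine sum_eq_zero fun j hj => ?_
  have hjk : j ≤ k := Nat.lt_succ_iff.mp (mem_range.mp hj)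
  rw [← mul_sum, Complex.im_ofReal_mul, Complex.im_sum_exp_int_mul_eq_zero (by omega), mul_zero]

theorem trig_sum_vanishes (N k l : ℕ) (hN : 2 ≤ N) (hkl : k + l ≤ N - 1) (ξ : ℝ) :
    ∑ n ∈ Finset.range N,
      Real.sin (l * (ξ - 2 * π * n / N)) * Real.cos (ξ - 2 * π * n / N) ^ k = 0 :=
  trig_sum_vanishes_general N k l hkl ξ
end

section
/- Let N ≥ 2 and 0 < s < 1 and let c_s > 0. For fixed 1/2 < r, r' < 2 with r ≠ r', the function ξ ↦ κ(ξ) := Σ_{n=0}^{N-1} c_s·(r² + r'² - 2rr'·cos(ξ - 2πn/N))^{-(1-s)} is strictly decreasing on (0, π/N) and strictly increasing on (-π/N, 0). -/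
/-!
Put `x_n(ξ) = A - B cos (ξ - 2πn/N)` with `A = r² + r'² > B = 2rr' > 0`. Writing
`μ - B cos φ = |a - b e^{iφ}|²` and multiplying over the `N`-th roots of unity gives
`∏ₙ (μ - B cos (ξ - 2πn/N)) = Q(μ) - 2 (B/2)^N cos (Nξ)`, so the logarithmic derivative in `μ`,
`∑ₙ 1 / (μ - B cos (ξ - 2πn/N)) = Q'(μ) / (Q(μ) - 2 (B/2)^N cos (Nξ))`, is a strictly increasing
function of `cos (Nξ)`. For `0 < q < 1`, `x ^ (-q)` is a positive superposition of the functions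
`x ↦ 1 / (x + λ)`, so `∑ₙ x_n(ξ) ^ (-q)` is a strictly increasing function of `cos (Nξ)` as well.
-/

open Real Finset MeasureTheory

theorem IsPrimitiveRoot.prod_sub_mul_pow {R : Type*} [CommRing R] [IsDomain R] {ζ : R} {N : ℕ}
    (hζ : IsPrimitiveRoot ζ N) (hN : 0 < N) (z w : R) :
    ∏ n ∈ range N, (z - w * ζ ^ n) = z ^ N - w ^ N := by
  have := congrArg (Polynomial.eval z) (X_pow_sub_C_eq_prod hζ hN (rfl : w ^ N = w ^ N))
  simpa [Polynomial.eval_prod, mul_comm] using this.symm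

theorem Complex.normSq_ofReal_sub_mul_exp (a b φ : ℝ) :
    Complex.normSq ((a : ℂ) - (b : ℂ) * Complex.exp (φ * Complex.I)) =
      a ^ 2 + b ^ 2 - 2 * a * b * Real.cos φ := by
  rw [Complex.normSq_apply]
  simp only [Complex.sub_re, Complex.sub_im, Complex.ofReal_re, Complex.ofReal_im,
    Complex.re_ofReal_mul, Complex.im_ofReal_mul, Complex.exp_ofReal_mul_I_re,
    Complex.exp_ofReal_mul_I_im]
  linear_combination b ^ 2 * Real.sin_sq_add_cos_sq φ

theorem prod_sq_add_sq_sub_mul_cos {N : ℕ} (hN : 0 < N) (a b ξ : ℝ) :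
    ∏ n ∈ range N, (a ^ 2 + b ^ 2 - 2 * a * b * cos (ξ - 2 * π * n / N)) =
      a ^ (2 * N) + b ^ (2 * N) - 2 * (a * b) ^ N * cos (N * ξ) := by
  set ζ := Complex.exp (2 * π * Complex.I / N)
  have hζ : IsPrimitiveRoot ζ N := Complex.isPrimitiveRoot_exp N hN.ne'
  have hfactor : ∀ n : ℕ, (a : ℂ) - b * Complex.exp ((2 * π * n / N - ξ : ℝ) * Complex.I) =
      a - (b * Complex.exp (-ξ * Complex.I)) * ζ ^ n := by
    intro n
    rw [← Complex.exp_nat_mul, mul_assoc (b : ℂ), ← Complex.exp_add]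
    congr 3
    push_cast
    ring
  calc ∏ n ∈ range N, (a ^ 2 + b ^ 2 - 2 * a * b * cos (ξ - 2 * π * n / N))
      = ∏ n ∈ range N, Complex.normSq (a - (b * Complex.exp (-ξ * Complex.I)) * ζ ^ n) := by
        refine prod_congr rfl fun n _ => ?_
        rw [← hfactor, Complex.normSq_ofReal_sub_mul_exp, ← cos_neg, neg_sub]
    _ = Complex.normSq ((a ^ N : ℝ) - (b ^ N : ℝ) * Complex.exp ((-(N * ξ) : ℝ) * Complex.I)) := by
        rw [← map_prod, hζ.prod_sub_mul_pow hN, mul_pow, ← Complex.exp_nat_mul]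
        push_cast
        ring_nf
    _ = a ^ (2 * N) + b ^ (2 * N) - 2 * (a * b) ^ N * cos (N * ξ) := by
        rw [Complex.normSq_ofReal_sub_mul_exp, cos_neg]
        ring

theorem exists_prod_sub_mul_cos_eq {N : ℕ} (hN : 0 < N) {B ν : ℝ} (hBν : |B| ≤ ν) :
    ∃ Q : ℝ, ∀ ξ : ℝ,
      ∏ n ∈ range N, (ν - B * cos (ξ - 2 * π * n / N)) = Q - 2 * (B / 2) ^ N * cos (N * ξ) := by
  obtain ⟨hνB, hBν⟩ := abs_le.1 hBν
  set x := √(ν + B)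
  set y := √(ν - B)
  have hx : x ^ 2 = ν + B := sq_sqrt (by linarith)
  have hy : y ^ 2 = ν - B := sq_sqrt (by linarith)
  have hsum : ((x + y) / 2) ^ 2 + ((x - y) / 2) ^ 2 = ν := by linear_combination (hx + hy) / 2
  have hprod : (x + y) / 2 * ((x - y) / 2) = B / 2 := by linear_combination (hx - hy) / 4
  refine ⟨((x + y) / 2) ^ (2 * N) + ((x - y) / 2) ^ (2 * N), fun ξ => ?_⟩
  rw [← hprod, ← prod_sq_add_sq_sub_mul_cos hN]
  refine prod_congr rfl fun n _ => ?_
  linear_combination -hsum + 2 * cos (ξ - 2 * π * n / N) * hprod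

theorem sum_inv_sub_eq_deriv_prod_div {ι : Type*} (s : Finset ι) {c : ι → ℝ} {μ : ℝ}
    (hc : ∀ i ∈ s, μ - c i ≠ 0) :
    ∑ i ∈ s, (μ - c i)⁻¹ = deriv (fun ν => ∏ i ∈ s, (ν - c i)) μ / ∏ i ∈ s, (μ - c i) := by
  classical
  have hderiv : HasDerivAt (fun ν => ∏ i ∈ s, (ν - c i))
      (∑ i ∈ s, ∏ j ∈ s.erase i, (μ - c j)) μ := by
    simpa using HasDerivAt.fun_finsetProd (u := s) fun i _ => (hasDerivAt_id μ).sub_const (c i)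
  rw [hderiv.deriv, eq_div_iff (prod_ne_zero_iff.2 hc), sum_mul]
  refine sum_congr rfl fun i hi => ?_
  rw [← mul_prod_erase s _ hi, ← mul_assoc, inv_mul_cancel₀ (hc i hi), one_mul]

theorem sum_inv_sub_mul_cos_lt {N : ℕ} (hN : 0 < N) {B μ ξ ξ' : ℝ} (hB : 0 < B) (hBμ : B < μ)
    (hcos : cos (N * ξ') < cos (N * ξ)) :
    ∑ n ∈ range N, (μ - B * cos (ξ' - 2 * π * n / N))⁻¹ <
      ∑ n ∈ range N, (μ - B * cos (ξ - 2 * π * n / N))⁻¹ := by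
  set P : ℝ → ℝ → ℝ := fun ξ ν => ∏ n ∈ range N, (ν - B * cos (ξ - 2 * π * n / N))
  have hfactor_pos : ∀ ξ ν (n : ℕ), B < ν → 0 < ν - B * cos (ξ - 2 * π * n / N) := fun ξ ν n h => by
    nlinarith [cos_le_one (ξ - 2 * π * n / N)]
  have hlog : ∀ ξ, ∑ n ∈ range N, (μ - B * cos (ξ - 2 * π * n / N))⁻¹ = deriv (P ξ) μ / P ξ μ :=
    fun ξ => sum_inv_sub_eq_deriv_prod_div _ fun n _ => (hfactor_pos ξ μ n hBμ).ne'
  set δ := 2 * (B / 2) ^ N * (cos (N * ξ) - cos (N * ξ'))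
  have hshift : ∀ ν, B < ν → P ξ ν = P ξ' ν - δ := fun ν hν => by
    obtain ⟨Q, hQ⟩ := exists_prod_sub_mul_cos_eq hN (abs_of_pos hB ▸ hν.le)
    simp only [P, hQ]
    ring
  have hderiv : deriv (P ξ) μ = deriv (P ξ') μ := by
    rw [← deriv_sub_const (f := P ξ') δ]
    exact Filter.EventuallyEq.deriv_eq (Filter.eventually_of_mem (Ioi_mem_nhds hBμ) hshift)
  have hδ : 0 < δ := by have := sub_pos.2 hcos; positivity
  have hP : 0 < P ξ μ := prod_pos fun n _ => hfactor_pos ξ μ n hBμ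
  have hP' : 0 < P ξ' μ := prod_pos fun n _ => hfactor_pos ξ' μ n hBμ
  have hD : 0 < deriv (P ξ') μ := by
    have : 0 < ∑ n ∈ range N, (μ - B * cos (ξ' - 2 * π * n / N))⁻¹ :=
      sum_pos (fun n _ => inv_pos.2 (hfactor_pos ξ' μ n hBμ)) (nonempty_range_iff.2 hN.ne')
    rw [hlog] at this
    exact (div_pos_iff_of_pos_right hP').1 this
  rw [hlog, hlog, hderiv, hshift μ hBμ]
  exact div_lt_div_of_pos_left hD (hshift μ hBμ ▸ hP) (by linarith)

theorem MeasureTheory.setIntegral_lt_setIntegral {X : Type*} [MeasurableSpace X] {μ : Measure X}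
    {s : Set X} {f g : X → ℝ} (hs : MeasurableSet s) (hμs : μ s ≠ 0) (hf : IntegrableOn f s μ)
    (hg : IntegrableOn g s μ) (hfg : ∀ x ∈ s, f x < g x) :
    ∫ x in s, f x ∂μ < ∫ x in s, g x ∂μ := by
  rw [← sub_pos, ← integral_sub hg hf]
  refine (setIntegral_pos_iff_support_of_nonneg_ae ?_ (hg.sub hf)).2 ?_
  · filter_upwards [ae_restrict_mem hs] with x hx using (sub_pos.2 (hfg x hx)).le
  · have : s ⊆ Function.support (g - f) ∩ s := fun x hx => ⟨(sub_pos.2 (hfg x hx)).ne', hx⟩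
    exact (pos_iff_ne_zero.2 hμs).trans_le (measure_mono this)

theorem Real.rpowIntegrand₀₁_inv {q t x : ℝ} (ht : 0 < t) (hx : 0 < x) :
    rpowIntegrand₀₁ q t x⁻¹ = t ^ (q - 2) * (x + t⁻¹)⁻¹ := by
  rw [rpowIntegrand₀₁, rpow_sub ht, rpow_two]
  field_simp
  ring

theorem Real.integrableOn_rpow_mul_inv_add_inv {q x : ℝ} (hq : q ∈ Set.Ioo 0 1) (hx : 0 < x) :
    IntegrableOn (fun t => t ^ (q - 2) * (x + t⁻¹)⁻¹) (Set.Ioi 0) :=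
  (integrableOn_rpowIntegrand₀₁_Ioi hq (inv_nonneg.2 hx.le)).congr_fun
    (fun _ ht => rpowIntegrand₀₁_inv ht hx) measurableSet_Ioi

theorem Real.rpow_neg_eq_const_mul_integral {q x : ℝ} (hq : q ∈ Set.Ioo 0 1) (hx : 0 < x) :
    x ^ (-q) = (∫ t in Set.Ioi 0, rpowIntegrand₀₁ q t 1)⁻¹ *
      ∫ t in Set.Ioi 0, t ^ (q - 2) * (x + t⁻¹)⁻¹ := by
  rw [rpow_neg hx.le, ← inv_rpow hx.le, rpow_eq_const_mul_integral hq (inv_nonneg.2 hx.le),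
    setIntegral_congr_fun measurableSet_Ioi fun _ ht => rpowIntegrand₀₁_inv ht hx]

theorem sum_rpow_neg_sub_mul_cos_lt {N : ℕ} (hN : 0 < N) {A B q ξ ξ' : ℝ} (hB : 0 < B)
    (hBA : B < A) (hq : q ∈ Set.Ioo 0 1) (hcos : cos (N * ξ') < cos (N * ξ)) :
    ∑ n ∈ range N, (A - B * cos (ξ' - 2 * π * n / N)) ^ (-q) <
      ∑ n ∈ range N, (A - B * cos (ξ - 2 * π * n / N)) ^ (-q) := by
  have hpos : ∀ ξ (n : ℕ), 0 < A - B * cos (ξ - 2 * π * n / N) := fun ξ n => by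
    nlinarith [cos_le_one (ξ - 2 * π * n / N)]
  set C := ∫ t in Set.Ioi 0, rpowIntegrand₀₁ q t 1
  have hint : ∀ ξ, IntegrableOn
      (fun t => ∑ n ∈ range N, t ^ (q - 2) * (A - B * cos (ξ - 2 * π * n / N) + t⁻¹)⁻¹)
      (Set.Ioi 0) := fun ξ =>
    integrable_finsetSum _ fun n _ => integrableOn_rpow_mul_inv_add_inv hq (hpos ξ n)
  have hrep : ∀ ξ, ∑ n ∈ range N, (A - B * cos (ξ - 2 * π * n / N)) ^ (-q) =
      C⁻¹ * ∫ t in Set.Ioi 0,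
        ∑ n ∈ range N, t ^ (q - 2) * (A - B * cos (ξ - 2 * π * n / N) + t⁻¹)⁻¹ := fun ξ => by
    rw [integral_finsetSum _ fun n _ => integrableOn_rpow_mul_inv_add_inv hq (hpos ξ n), mul_sum]
    exact sum_congr rfl fun n _ => rpow_neg_eq_const_mul_integral hq (hpos ξ n)
  rw [hrep, hrep]
  refine mul_lt_mul_of_pos_left ?_ (inv_pos.2 (integral_rpowIntegrand₀₁_one_pos hq))
  refine setIntegral_lt_setIntegral measurableSet_Ioi (by simp) (hint ξ') (hint ξ) fun t ht => ?_
  simp only [← mul_sum, sub_add_eq_add_sub]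
  exact mul_lt_mul_of_pos_left
    (sum_inv_sub_mul_cos_lt hN hB (by have := inv_pos.2 (Set.mem_Ioi.1 ht); linarith) hcos)
    (rpow_pos_of_pos ht _)

theorem strictAntiOn_strictMonoOn_of_cos_nat_mul_lt {N : ℕ} (hN : 0 < N) {f : ℝ → ℝ}
    (hf : ∀ ξ ξ', cos (N * ξ') < cos (N * ξ) → f ξ' < f ξ) :
    StrictAntiOn f (Set.Ioo 0 (π / N)) ∧ StrictMonoOn f (Set.Ioo (-(π / N)) 0) := by
  have hN' : (0 : ℝ) < N := Nat.cast_pos.2 hN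
  have hmem : ∀ {ξ}, ξ ∈ Set.Ioo 0 (π / N) → N * ξ ∈ Set.Icc 0 π := fun hξ =>
    ⟨by nlinarith [hξ.1], by nlinarith [hξ.2, mul_div_cancel₀ π hN'.ne']⟩
  refine ⟨fun ξ hξ ξ' hξ' hlt => hf _ _ ?_, fun ξ hξ ξ' hξ' hlt => hf _ _ ?_⟩
  · exact strictAntiOn_cos (hmem hξ) (hmem hξ') (by gcongr)
  · rw [← cos_neg (N * ξ), ← cos_neg (N * ξ'), ← mul_neg, ← mul_neg]
    have hneg : ∀ {x}, x ∈ Set.Ioo (-(π / N)) 0 → -x ∈ Set.Ioo 0 (π / N) := fun hx =>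
      ⟨by linarith [hx.2], by linarith [hx.1]⟩
    exact strictAntiOn_cos (hmem (hneg hξ')) (hmem (hneg hξ)) (by gcongr)

theorem kernel_angular_monotonicity_general (N : ℕ) (hN : 2 ≤ N) (s c_s r r' : ℝ)
    (hs0 : 0 < s) (hs1 : s < 1) (hc : 0 < c_s)
    (hr : 1 / 2 < r) (hr' : 1 / 2 < r') (hrr' : r ≠ r') :
    StrictAntiOn
      (fun ξ : ℝ => ∑ n ∈ Finset.range N,
        c_s * (r ^ 2 + r' ^ 2 - 2 * r * r' * Real.cos (ξ - 2 * π * n / N)) ^ (-(1 - s)))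
      (Set.Ioo 0 (π / N)) ∧
    StrictMonoOn
      (fun ξ : ℝ => ∑ n ∈ Finset.range N,
        c_s * (r ^ 2 + r' ^ 2 - 2 * r * r' * Real.cos (ξ - 2 * π * n / N)) ^ (-(1 - s)))
      (Set.Ioo (-(π / N)) 0) := by
  have hN0 : 0 < N := by omega
  have hB : 0 < 2 * r * r' := by nlinarith
  have hBA : 2 * r * r' < r ^ 2 + r' ^ 2 := by nlinarith [sq_pos_of_ne_zero (sub_ne_zero.2 hrr')]
  refine strictAntiOn_strictMonoOn_of_cos_nat_mul_lt hN0 fun ξ ξ' hcos => ?_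
  simp only [← mul_sum]
  exact mul_lt_mul_of_pos_left
    (sum_rpow_neg_sub_mul_cos_lt hN0 hB hBA ⟨by linarith, by linarith⟩ hcos) hc

theorem kernel_angular_monotonicity (N : ℕ) (hN : 2 ≤ N) (s c_s r r' : ℝ)
    (hs0 : 0 < s) (hs1 : s < 1) (hc : 0 < c_s)
    (hr : 1 / 2 < r) (hr2 : r < 2) (hr' : 1 / 2 < r') (hr'2 : r' < 2) (hrr' : r ≠ r') :
    StrictAntiOn
      (fun ξ : ℝ => ∑ n ∈ Finset.range N,
        c_s * (r ^ 2 + r' ^ 2 - 2 * r * r' * Real.cos (ξ - 2 * π * n / N)) ^ (-(1 - s)))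
      (Set.Ioo 0 (π / N)) ∧
    StrictMonoOn
      (fun ξ : ℝ => ∑ n ∈ Finset.range N,
        c_s * (r ^ 2 + r' ^ 2 - 2 * r * r' * Real.cos (ξ - 2 * π * n / N)) ^ (-(1 - s)))
      (Set.Ioo (-(π / N)) 0) :=
  kernel_angular_monotonicity_general N hN s c_s r r' hs0 hs1 hc hr hr' hrr'
end
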